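/- arXiv:2008.05878 — 2 statements merged into one kernel-verified Lean document; each statement's English description precedes it below -/
import Mathlib

section
/- Let A = [0,L] be an interval partitioned into J subintervals D_j = [a_j, a_{j+1}] with 0 = a_1 < a_2 < ... < a_{J+1} = L, and let ρ > 0 satisfy 2ρ < min_j (a_{j+1} - a_j). Define P_ρ(x) = length(D_j ∩ [x-ρ, x+ρ] ∩ [0,L]) / length([x-ρ, x+ρ] ∩ [0,L]) for x ∈ D_j. Then the average (1/L) ∫_0^L P_ρ(x) dx equals 1 - ((J-1)/2) · (ρ/L). -/
/-!
On a cell `[c, d]` of length at least `2ρ`, the ball around `x` meets only `[c, d]` unless `x` is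
within `ρ` of an endpoint. Near an endpoint that is `0` or `L` the ball is truncated by `[0, L]`
in the same way, so `P_ρ = 1` there; near an interior partition point the ball is not truncated and
`P_ρ` falls linearly from `1` to `1/2`, so its integral over that strip is `3ρ/4` instead of `ρ`.
Each of the `J - 1` interior points borders two cells, hence `∫ P_ρ = L - (J - 1) ρ / 2`.
-/

open MeasureTheory Set

theorem sum_range_succ_ite_eq_zero (r : ℝ) {n k : ℕ} (hk : k ≤ n) :
    ∑ j ∈ Finset.range (n + 1), (if j = k then 0 else r) = n * r := by
  rw [Finset.sum_ite, Finset.sum_const_zero, zero_add, Finset.filter_ne', Finset.sum_const,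
    Finset.card_erase_of_mem (Finset.mem_range.2 (Nat.lt_succ_of_le hk)), Finset.card_range,
    nsmul_eq_mul, Nat.succ_sub_one]

theorem add_le_of_forall_le_sub {a : ℕ → ℝ} {N : ℕ} {δ : ℝ} (hδ : 0 ≤ δ)
    (hgap : ∀ j < N, δ ≤ a (j + 1) - a j) {i j : ℕ} (hij : i < j) (hj : j ≤ N) :
    a i + δ ≤ a j := by
  induction j, hij using Nat.le_induction with
  | base => linarith [hgap i hj]
  | succ k hik ih => linarith [ih (by omega), hgap k hj]

/-- `P_ρ` on the cell `D = [c, d]` of the partition of `[0, L]`. -/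
noncomputable def matchFraction (L ρ c d x : ℝ) : ℝ :=
  (volume (Icc c d ∩ Icc (x - ρ) (x + ρ) ∩ Icc 0 L)).toReal /
    (volume (Icc (x - ρ) (x + ρ) ∩ Icc 0 L)).toReal

section MatchFraction

variable {L ρ c d : ℝ}

theorem matchFraction_eq (hρ : 0 ≤ ρ) (hc : 0 ≤ c) (hd : d ≤ L) {x : ℝ} (hx : x ∈ Icc c d) :
    matchFraction L ρ c d x =
      (min (x + ρ) d - max (x - ρ) c) / (min (x + ρ) L - max (x - ρ) 0) := by
  obtain ⟨hcx, hxd⟩ := hx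
  have hlo : max (max c (x - ρ)) 0 = max (x - ρ) c := by
    rw [max_eq_left (le_max_of_le_left hc), max_comm]
  have hhi : min (min d (x + ρ)) L = min (x + ρ) d := by
    rw [min_eq_left (min_le_of_left_le hd), min_comm]
  have hnum : max (x - ρ) c ≤ min (x + ρ) d :=
    max_le (le_min (by linarith) (by linarith)) (le_min (by linarith) (hcx.trans hxd))
  have hden : max (x - ρ) 0 ≤ min (x + ρ) L :=
    max_le (le_min (by linarith) (by linarith)) (le_min (by linarith) (by linarith))
  simp only [matchFraction, Icc_inter_Icc, Real.volume_Icc]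
  rw [hlo, hhi, ENNReal.toReal_ofReal (sub_nonneg.2 hnum),
    ENNReal.toReal_ofReal (sub_nonneg.2 hden)]

theorem continuousOn_matchFraction (hρ : 0 < ρ) (hc : 0 ≤ c) (hd : d ≤ L) (hL : 0 < L) :
    ContinuousOn (matchFraction L ρ c d) (Icc c d) := by
  refine ContinuousOn.congr ?_ fun x hx => matchFraction_eq hρ.le hc hd hx
  refine ContinuousOn.div (by fun_prop) (by fun_prop) fun x ⟨hcx, hxd⟩ => (sub_pos.2 ?_).ne'
  exact max_lt (lt_min (by linarith) (by linarith)) (lt_min (by linarith) hL)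

theorem matchFraction_eqOn_left_of_eq_zero (hρ : 0 < ρ) (hd : d ≤ L) (hρd : 2 * ρ ≤ d) :
    EqOn (matchFraction L ρ 0 d) 1 (Icc 0 ρ) := fun x ⟨h0x, hxρ⟩ => by
  rw [matchFraction_eq hρ.le le_rfl hd ⟨h0x, by linarith⟩, min_eq_left (by linarith : x + ρ ≤ d),
    min_eq_left (by linarith : x + ρ ≤ L), max_eq_right (by linarith : x - ρ ≤ 0),
    div_self (by linarith), Pi.one_apply]

theorem matchFraction_eqOn_left (hρ : 0 < ρ) (hc : ρ ≤ c) (hd : d ≤ L) (hcd : 2 * ρ ≤ d - c) :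
    EqOn (matchFraction L ρ c d) (fun x => (x - (c - ρ)) / (2 * ρ)) (Icc c (c + ρ)) :=
  fun x ⟨hcx, hxc⟩ => by
  rw [matchFraction_eq hρ.le (by linarith) hd ⟨hcx, by linarith⟩,
    min_eq_left (by linarith : x + ρ ≤ d), min_eq_left (by linarith : x + ρ ≤ L),
    max_eq_right (by linarith : x - ρ ≤ c), max_eq_left (by linarith : 0 ≤ x - ρ)]
  ring_nf

theorem matchFraction_eqOn_middle (hρ : 0 < ρ) (hc : 0 ≤ c) (hd : d ≤ L) :
    EqOn (matchFraction L ρ c d) 1 (Icc (c + ρ) (d - ρ)) := fun x ⟨hcx, hxd⟩ => by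
  rw [matchFraction_eq hρ.le hc hd ⟨by linarith, by linarith⟩,
    min_eq_left (by linarith : x + ρ ≤ d), min_eq_left (by linarith : x + ρ ≤ L),
    max_eq_left (by linarith : c ≤ x - ρ), max_eq_left (by linarith : 0 ≤ x - ρ),
    div_self (by linarith), Pi.one_apply]

theorem matchFraction_eqOn_right_of_eq (hρ : 0 < ρ) (hc : 0 ≤ c) (hcL : 2 * ρ ≤ L - c) :
    EqOn (matchFraction L ρ c L) 1 (Icc (L - ρ) L) := fun x ⟨hLx, hxL⟩ => by
  rw [matchFraction_eq hρ.le hc le_rfl ⟨by linarith, hxL⟩, min_eq_right (by linarith : L ≤ x + ρ),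
    max_eq_left (by linarith : c ≤ x - ρ), max_eq_left (by linarith : 0 ≤ x - ρ),
    div_self (by linarith), Pi.one_apply]

theorem matchFraction_eqOn_right (hρ : 0 < ρ) (hc : 0 ≤ c) (hd : d + ρ ≤ L)
    (hcd : 2 * ρ ≤ d - c) :
    EqOn (matchFraction L ρ c d) (fun x => (d + ρ - x) / (2 * ρ)) (Icc (d - ρ) d) :=
  fun x ⟨hdx, hxd⟩ => by
  rw [matchFraction_eq hρ.le hc (by linarith) ⟨by linarith, hxd⟩,
    min_eq_right (by linarith : d ≤ x + ρ), min_eq_left (by linarith : x + ρ ≤ L),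
    max_eq_left (by linarith : c ≤ x - ρ), max_eq_left (by linarith : 0 ≤ x - ρ)]
  ring_nf

theorem integral_matchFraction_left (hρ : 0 < ρ) (hc : c = 0 ∨ ρ ≤ c) (hd : d ≤ L)
    (hcd : 2 * ρ ≤ d - c) :
    ∫ x in c..c + ρ, matchFraction L ρ c d x = ρ - if c = 0 then 0 else ρ / 4 := by
  rcases hc with rfl | hc
  · rw [zero_add, intervalIntegral.integral_congr (uIcc_of_le hρ.le ▸
      matchFraction_eqOn_left_of_eq_zero hρ hd (by linarith))]
    simp
  · rw [if_neg (hρ.trans_le hc).ne', intervalIntegral.integral_congr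
      (uIcc_of_le (le_add_of_nonneg_right hρ.le) ▸ matchFraction_eqOn_left hρ hc hd hcd)]
    simp only [intervalIntegral.integral_div, intervalIntegral.integral_comp_sub_right
      (fun x : ℝ => x), integral_id]
    field_simp
    ring

theorem integral_matchFraction_middle (hρ : 0 < ρ) (hc : 0 ≤ c) (hd : d ≤ L)
    (hcd : 2 * ρ ≤ d - c) :
    ∫ x in c + ρ..d - ρ, matchFraction L ρ c d x = d - c - 2 * ρ := by
  rw [intervalIntegral.integral_congr
    (uIcc_of_le (by linarith : c + ρ ≤ d - ρ) ▸ matchFraction_eqOn_middle hρ hc hd)]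
  simp only [Pi.one_apply, intervalIntegral.integral_const, smul_eq_mul, mul_one]
  ring

theorem integral_matchFraction_right (hρ : 0 < ρ) (hc : 0 ≤ c) (hd : d = L ∨ d + ρ ≤ L)
    (hcd : 2 * ρ ≤ d - c) :
    ∫ x in d - ρ..d, matchFraction L ρ c d x = ρ - if d = L then 0 else ρ / 4 := by
  rcases hd with rfl | hd
  · rw [intervalIntegral.integral_congr (uIcc_of_le (sub_le_self d hρ.le) ▸
      matchFraction_eqOn_right_of_eq hρ hc (by linarith))]
    simp
  · rw [if_neg (by linarith : d < L).ne, intervalIntegral.integral_congr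
      (uIcc_of_le (sub_le_self d hρ.le) ▸ matchFraction_eqOn_right hρ hc hd hcd)]
    simp only [intervalIntegral.integral_div, intervalIntegral.integral_comp_sub_left
      (fun x : ℝ => x), integral_id]
    field_simp
    ring

theorem integral_matchFraction (hρ : 0 < ρ) (hc : c = 0 ∨ ρ ≤ c) (hd : d = L ∨ d + ρ ≤ L)
    (hcd : 2 * ρ ≤ d - c) :
    ∫ x in c..d, matchFraction L ρ c d x =
      d - c - (if c = 0 then 0 else ρ / 4) - (if d = L then 0 else ρ / 4) := by
  have hc0 : 0 ≤ c := by rcases hc with rfl | hc <;> linarith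
  have hdL : d ≤ L := by rcases hd with rfl | hd <;> linarith
  have hcont := continuousOn_matchFraction hρ hc0 hdL (by linarith)
  have hint : ∀ u ∈ Icc c d, ∀ v ∈ Icc c d, IntervalIntegrable (matchFraction L ρ c d) volume u v :=
    fun u hu v hv => (hcont.mono (uIcc_subset_Icc hu hv)).intervalIntegrable
  have h1 : c + ρ ∈ Icc c d := ⟨by linarith, by linarith⟩
  have h2 : d - ρ ∈ Icc c d := ⟨by linarith, by linarith⟩
  have hc' : c ∈ Icc c d := ⟨le_rfl, by linarith⟩
  have hd' : d ∈ Icc c d := ⟨by linarith, le_rfl⟩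
  rw [← intervalIntegral.integral_add_adjacent_intervals (hint c hc' _ h1) (hint _ h1 d hd'),
    ← intervalIntegral.integral_add_adjacent_intervals (hint _ h1 _ h2) (hint _ h2 d hd'),
    integral_matchFraction_left hρ hc hdL hcd, integral_matchFraction_middle hρ hc0 hdL hcd,
    integral_matchFraction_right hρ hc0 hd hcd]
  ring

end MatchFraction

section Partition

variable {n : ℕ} {a : ℕ → ℝ} {L ρ : ℝ} {P : ℝ → ℝ}

theorem integral_partition_cell (hρ : 0 < ρ) (ha0 : a 0 = 0) (haL : a (n + 1) = L)
    (hgap : ∀ j < n + 1, 2 * ρ ≤ a (j + 1) - a j) {j : ℕ} (hj : j < n + 1)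
    (hP : EqOn (matchFraction L ρ (a j) (a (j + 1))) P (Ioo (a j) (a (j + 1)))) :
    IntervalIntegrable P volume (a j) (a (j + 1)) ∧ ∫ x in a j..a (j + 1), P x =
      a (j + 1) - a j - (if j = 0 then 0 else ρ / 4) - (if j = n then 0 else ρ / 4) := by
  have hle {i k : ℕ} (hik : i < k) (hk : k ≤ n + 1) : a i + 2 * ρ ≤ a k :=
    add_le_of_forall_le_sub (by positivity) hgap hik hk
  have h0 : a j = 0 ↔ j = 0 :=
    ⟨fun h => by_contra fun hj0 => by linarith [hle (Nat.pos_of_ne_zero hj0) hj.le],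
      fun h => h ▸ ha0⟩
  have hn : a (j + 1) = L ↔ j = n :=
    ⟨fun h => by_contra fun hjn => by linarith [hle (show j + 1 < n + 1 by omega) le_rfl],
      fun h => h ▸ haL⟩
  have hc : a j = 0 ∨ ρ ≤ a j := (em (j = 0)).imp h0.2 fun hj0 => by
    linarith [hle (Nat.pos_of_ne_zero hj0) hj.le]
  have hd : a (j + 1) = L ∨ a (j + 1) + ρ ≤ L := (em (j = n)).imp hn.2 fun hjn => by
    linarith [hle (show j + 1 < n + 1 by omega) le_rfl]
  have hcd : a j ≤ a (j + 1) := by linarith [hgap j hj]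
  refine ⟨?_, ?_⟩
  · refine ContinuousOn.intervalIntegrable_of_Icc hcd ?_ |>.congr_uIoo (uIoo_of_le hcd ▸ hP)
    exact continuousOn_matchFraction hρ (by rcases hc with h | h <;> linarith)
      (by rcases hd with h | h <;> linarith) (by linarith [hle n.succ_pos le_rfl])
  · rw [← intervalIntegral.integral_congr_Ioo_of_le hcd hP,
      integral_matchFraction hρ hc hd (hgap j hj)]
    simp only [h0, hn]

theorem integral_partition (hρ : 0 < ρ) (ha0 : a 0 = 0) (haL : a (n + 1) = L)
    (hgap : ∀ j < n + 1, 2 * ρ ≤ a (j + 1) - a j)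
    (hP : ∀ j < n + 1, EqOn (matchFraction L ρ (a j) (a (j + 1))) P (Ioo (a j) (a (j + 1)))) :
    ∫ x in 0..L, P x = L - n * ρ / 2 := by
  have hcell j (hj : j < n + 1) := integral_partition_cell hρ ha0 haL hgap hj (hP j hj)
  rw [← ha0, ← haL, ← intervalIntegral.sum_integral_adjacent_intervals fun j hj => (hcell j hj).1,
    Finset.sum_congr rfl fun j hj => (hcell j (Finset.mem_range.1 hj)).2,
    Finset.sum_sub_distrib, Finset.sum_sub_distrib, Finset.sum_range_sub,
    sum_range_succ_ite_eq_zero _ (Nat.zero_le n), sum_range_succ_ite_eq_zero _ le_rfl, ha0]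
  ring

end Partition

theorem average_match_one_dim_general (J : ℕ) (hJ : 1 ≤ J) (L ρ : ℝ) (a : ℕ → ℝ)
    (ha0 : a 0 = 0) (haJ : a J = L)
    (hρpos : 0 < ρ)
    (hρsmall : ∀ j < J, 2 * ρ < a (j + 1) - a j)
    (P : ℝ → ℝ)
    (hP : ∀ j < J, ∀ x ∈ Set.Ioo (a j) (a (j + 1)),
      P x = (volume (Set.Icc (a j) (a (j + 1)) ∩ Set.Icc (x - ρ) (x + ρ) ∩ Set.Icc 0 L)).toReal
        / (volume (Set.Icc (x - ρ) (x + ρ) ∩ Set.Icc 0 L)).toReal) :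
    (1 / L) * ∫ x in (0:ℝ)..L, P x = 1 - (((J : ℝ) - 1) / 2) * (ρ / L) := by
  obtain ⟨n, rfl⟩ : ∃ n, J = n + 1 := ⟨J - 1, by omega⟩
  have hgap j (hj : j < n + 1) := (hρsmall j hj).le
  have hL : 0 < L := by linarith [add_le_of_forall_le_sub (by positivity) hgap n.succ_pos le_rfl]
  rw [integral_partition hρpos ha0 haJ hgap fun j hj x hx => (hP j hj x hx).symm]
  push_cast
  field_simp
  ring

/-- average probability of correct match in the one-dimensional case,
for small uncertainty radius. -/
theorem average_match_one_dim (J : ℕ) (hJ : 1 ≤ J) (L ρ : ℝ) (a : ℕ → ℝ)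
    (ha0 : a 0 = 0) (haJ : a J = L)
    (hmono : ∀ j < J, a j < a (j + 1))
    (hρpos : 0 < ρ)
    (hρsmall : ∀ j < J, 2 * ρ < a (j + 1) - a j)
    (P : ℝ → ℝ)
    (hP : ∀ j < J, ∀ x ∈ Set.Ioo (a j) (a (j + 1)),
      P x = (volume (Set.Icc (a j) (a (j + 1)) ∩ Set.Icc (x - ρ) (x + ρ) ∩ Set.Icc 0 L)).toReal
        / (volume (Set.Icc (x - ρ) (x + ρ) ∩ Set.Icc 0 L)).toReal) :
    (1 / L) * ∫ x in (0:ℝ)..L, P x = 1 - (((J : ℝ) - 1) / 2) * (ρ / L) :=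
  average_match_one_dim_general J hJ L ρ a ha0 haJ hρpos hρsmall P hP
end

section
/- For K ≥ 2 and ρ > 0, let A(t) be the volume of the spherical cap {(y,z) ∈ ℝ^{K-1} × ℝ : z ≥ 0, |y|² + (z+t)² ≤ ρ²}. Then (1/vol(B(0,ρ))) ∫_0^ρ A(t) dt = c_K · ρ, where c_K = Γ(K/2 + 1)/(2√π · Γ((K+3)/2)) and B(0,ρ) is the K-dimensional ball of radius ρ. -/
/-!
Cutting the cap by the hyperplanes `z = const` (Cavalieri) gives
`A t = ∫ s in t..ρ, ω_{K-1} (ρ² - s²)^((K-1)/2)`, where `ω_n` is the volume of the unit ball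
of `ℝⁿ`. Integrating by parts,
`∫ t in 0..ρ, A t = ∫ s in 0..ρ, s ω_{K-1} (ρ² - s²)^((K-1)/2) = ω_{K-1} ρ^(K+1) / (K+1)`,
and after division by `vol B(0,ρ) = ω_K ρ^K` the functional equation of `Γ` turns
`ω_{K-1} / ((K+1) ω_K)` into `c_K`.
-/

open MeasureTheory Real Set Fintype

noncomputable def unitBallVolume (n : ℕ) : ℝ := √π ^ n / Gamma (n / 2 + 1)

/-- The `n`-volume of the slice at height `s` of the `ρ`-ball of `ℝⁿ⁺¹`. For `n ≠ 0` it vanishes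
for `|s| ≥ ρ`, since `Real.sqrt` is `0` on negative arguments. -/
noncomputable def ballSliceVolume (n : ℕ) (ρ s : ℝ) : ℝ :=
  unitBallVolume n * √(ρ ^ 2 - s ^ 2) ^ n

lemma unitBallVolume_pos (n : ℕ) : 0 < unitBallVolume n :=
  div_pos (by positivity) (Gamma_pos_of_pos (by positivity))

lemma unitBallVolume_div_succ (n : ℕ) :
    unitBallVolume n / (((n : ℝ) + 2) * unitBallVolume (n + 1))
      = Gamma (((n : ℝ) + 1) / 2 + 1) / (2 * √π * Gamma (((n : ℝ) + 1 + 3) / 2)) := by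
  have hΓ : Gamma (((n : ℝ) + 1 + 3) / 2) = ((n : ℝ) / 2 + 1) * Gamma ((n : ℝ) / 2 + 1) := by
    rw [← Gamma_add_one (by positivity)]
    ring_nf
  have := (Gamma_pos_of_pos (by positivity : (0 : ℝ) < n / 2 + 1)).ne'
  have := (Gamma_pos_of_pos (by positivity : (0 : ℝ) < (n + 1) / 2 + 1)).ne'
  have := (sqrt_pos.2 pi_pos).ne'
  rw [unitBallVolume, unitBallVolume, hΓ]
  push_cast
  field_simp
  ring

lemma ballSliceVolume_nonneg (n : ℕ) (ρ s : ℝ) : 0 ≤ ballSliceVolume n ρ s :=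
  mul_nonneg (unitBallVolume_pos n).le (by positivity)

lemma continuous_ballSliceVolume (n : ℕ) (ρ : ℝ) : Continuous (ballSliceVolume n ρ) := by
  unfold ballSliceVolume
  fun_prop

lemma ballSliceVolume_eq_zero {n : ℕ} (hn : n ≠ 0) {ρ s : ℝ} (h : ρ ^ 2 ≤ s ^ 2) :
    ballSliceVolume n ρ s = 0 := by
  rw [ballSliceVolume, sqrt_eq_zero_of_nonpos (by linarith), zero_pow hn, mul_zero]

lemma integral_mul_ballSliceVolume (n : ℕ) {ρ : ℝ} (hρ : 0 ≤ ρ) :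
    ∫ s in 0..ρ, s * ballSliceVolume n ρ s = unitBallVolume n * ρ ^ (n + 2) / (n + 2) := by
  have hderiv : ∀ s ∈ Ioo 0 ρ, HasDerivAt
      (fun s => -(unitBallVolume n * √(ρ ^ 2 - s ^ 2) ^ (n + 2) / (n + 2)))
      (s * ballSliceVolume n ρ s) s := by
    rintro s ⟨hs0, hsρ⟩
    have hpos : 0 < ρ ^ 2 - s ^ 2 := by nlinarith
    have h := (((hasDerivAt_pow 2 s).const_sub (ρ ^ 2)).sqrt hpos.ne').pow (n + 2)
    refine (((h.const_mul (unitBallVolume n)).div_const ((n : ℝ) + 2)).neg).congr_deriv ?_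
    have := (sqrt_pos.2 hpos).ne'
    rw [ballSliceVolume, Nat.add_succ_sub_one, pow_succ _ n]
    field_simp
    push_cast
    ring
  rw [intervalIntegral.integral_eq_sub_of_hasDerivAt_of_le hρ (by fun_prop) hderiv
    ((continuous_id.mul (continuous_ballSliceVolume n ρ)).intervalIntegrable 0 ρ)]
  simp [sqrt_sq hρ]

lemma lintegral_Ici_ofReal_eq_intervalIntegral {g : ℝ → ℝ} (hg : Continuous g)
    (hg_nonneg : ∀ x, 0 ≤ g x) {a b : ℝ} (hab : a ≤ b)
    (hg_zero : ∀ x, b ≤ x → g x = 0) :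
    ∫⁻ x in Ici a, ENNReal.ofReal (g x) = ENNReal.ofReal (∫ x in a..b, g x) := by
  have hsupp : (fun x => ENNReal.ofReal (g x)).support ⊆ Iic b := by
    intro x hx
    by_contra hxb
    exact hx (by simp [hg_zero x (not_le.mp hxb).le])
  rw [← setLIntegral_eq_of_support_subset hsupp, Measure.restrict_restrict measurableSet_Iic,
    Iic_inter_Ici, intervalIntegral.integral_of_le hab, ← integral_Icc_eq_integral_Ioc,
    ofReal_integral_eq_lintegral_ofReal hg.integrableOn_Icc
      (Filter.Eventually.of_forall hg_nonneg)]

lemma integral_integral_eq_integral_sub_mul {f : ℝ → ℝ} (hf : Continuous f) (a b : ℝ) :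
    ∫ t in a..b, ∫ s in t..b, f s = ∫ t in a..b, (t - a) * f t := by
  have hderiv (t : ℝ) : HasDerivAt (fun u => ∫ s in u..b, f s) (-f t) t :=
    intervalIntegral.integral_hasDerivAt_left (hf.intervalIntegrable t b)
      (hf.stronglyMeasurableAtFilter _ _) hf.continuousAt
  have hparts := intervalIntegral.integral_mul_deriv_eq_deriv_mul (a := a) (b := b)
    (fun t _ => hderiv t) (fun t _ => (hasDerivAt_id t).sub_const a)
    (hf.neg.intervalIntegrable a b) (continuous_const.intervalIntegrable a b)
  simpa [mul_comm] using hparts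

namespace EuclideanSpace

variable {ι : Type*} [Fintype ι] [Nonempty ι]

lemma volume_closedBall_eq_unitBallVolume (x : EuclideanSpace ℝ ι) (r : ℝ) :
    volume (Metric.closedBall x r)
      = ENNReal.ofReal r ^ card ι * ENNReal.ofReal (unitBallVolume (card ι)) :=
  volume_closedBall ι x r

lemma volume_setOf_norm_sq_add_sq_le (ρ s : ℝ) :
    volume {y : EuclideanSpace ℝ ι | ‖y‖ ^ 2 + s ^ 2 ≤ ρ ^ 2}
      = ENNReal.ofReal (ballSliceVolume (card ι) ρ s) := by
  rcases lt_or_ge (ρ ^ 2) (s ^ 2) with h | h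
  · have hempty : {y : EuclideanSpace ℝ ι | ‖y‖ ^ 2 + s ^ 2 ≤ ρ ^ 2} = ∅ :=
      eq_empty_of_forall_notMem fun y hy => by nlinarith [sq_nonneg ‖y‖, hy.out]
    rw [hempty, measure_empty, ballSliceVolume_eq_zero card_ne_zero h.le, ENNReal.ofReal_zero]
  · have hball : {y : EuclideanSpace ℝ ι | ‖y‖ ^ 2 + s ^ 2 ≤ ρ ^ 2}
        = Metric.closedBall 0 √(ρ ^ 2 - s ^ 2) := by
      ext y
      rw [mem_ofPred_eq, mem_closedBall_zero_iff, le_sqrt (norm_nonneg y) (by linarith)]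
      constructor <;> intro <;> linarith
    rw [hball, volume_closedBall_eq_unitBallVolume, ballSliceVolume, mul_comm,
      ENNReal.ofReal_mul (unitBallVolume_pos _).le, ENNReal.ofReal_pow (sqrt_nonneg _)]

lemma volume_cap_eq_integral {ρ t : ℝ} (hρ : 0 ≤ ρ) (ht : t ≤ ρ) :
    volume {p : EuclideanSpace ℝ ι × ℝ | 0 ≤ p.2 ∧ ‖p.1‖ ^ 2 + (p.2 + t) ^ 2 ≤ ρ ^ 2}
      = ENNReal.ofReal (∫ s in t..ρ, ballSliceVolume (card ι) ρ s) := by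
  set S := {p : EuclideanSpace ℝ ι × ℝ | 0 ≤ p.2 ∧ ‖p.1‖ ^ 2 + (p.2 + t) ^ 2 ≤ ρ ^ 2}
  have hS : MeasurableSet S :=
    ((isClosed_le continuous_const continuous_snd).inter
      (isClosed_le (by fun_prop : Continuous fun p : EuclideanSpace ℝ ι × ℝ =>
        ‖p.1‖ ^ 2 + (p.2 + t) ^ 2) continuous_const)).measurableSet
  have hslice (z : ℝ) : volume ((·, z) ⁻¹' S)
      = (Ici 0).indicator (fun z => ENNReal.ofReal (ballSliceVolume (card ι) ρ (z + t))) z := by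
    by_cases hz : 0 ≤ z
    · rw [indicator_of_mem (mem_Ici.2 hz), ← volume_setOf_norm_sq_add_sq_le]
      simp [S, hz]
    · simp [S, hz]
  have hslice_zero (z : ℝ) (hz : ρ - t ≤ z) : ballSliceVolume (card ι) ρ (z + t) = 0 :=
    ballSliceVolume_eq_zero card_ne_zero (by nlinarith)
  rw [Measure.volume_eq_prod, Measure.prod_apply_symm hS, lintegral_congr hslice,
    lintegral_indicator measurableSet_Ici,
    lintegral_Ici_ofReal_eq_intervalIntegral (g := fun z => ballSliceVolume _ ρ (z + t))
      ((continuous_ballSliceVolume _ ρ).comp (continuous_add_const t))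
      (fun _ => ballSliceVolume_nonneg ..) (sub_nonneg.2 ht) hslice_zero,
    intervalIntegral.integral_comp_add_right, zero_add, sub_add_cancel]

end EuclideanSpace

/-- the average spherical cap volume: (1/vol B(0,ρ)) ∫_0^ρ A(t) dt = c_K ρ. -/
theorem average_cap_volume (K : ℕ) (hK : 2 ≤ K) (ρ : ℝ) (hρ : 0 < ρ)
    (A : ℝ → ENNReal)
    (hA : ∀ t, A t = volume {p : EuclideanSpace ℝ (Fin (K - 1)) × ℝ |
      0 ≤ p.2 ∧ ‖p.1‖ ^ 2 + (p.2 + t) ^ 2 ≤ ρ ^ 2}) :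
    (1 / (volume (Metric.closedBall (0 : EuclideanSpace ℝ (Fin K)) ρ)).toReal) *
        ∫ t in (0:ℝ)..ρ, (A t).toReal
      = (Real.Gamma ((K : ℝ) / 2 + 1) / (2 * Real.sqrt π * Real.Gamma (((K : ℝ) + 3) / 2))) * ρ := by
  obtain ⟨n, rfl⟩ : ∃ n, K = n + 1 := ⟨K - 1, by omega⟩
  have : Nonempty (Fin n) := ⟨⟨0, by omega⟩⟩
  have hcap : ∀ t ∈ uIcc 0 ρ, (A t).toReal = ∫ s in t..ρ, ballSliceVolume n ρ s := by
    intro t ht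
    rw [uIcc_of_le hρ.le] at ht
    rw [hA, Nat.add_sub_cancel, EuclideanSpace.volume_cap_eq_integral hρ.le ht.2, card_fin,
      ENNReal.toReal_ofReal
        (intervalIntegral.integral_nonneg ht.2 fun s _ => ballSliceVolume_nonneg n ρ s)]
  have hball : (volume (Metric.closedBall (0 : EuclideanSpace ℝ (Fin (n + 1))) ρ)).toReal
      = ρ ^ (n + 1) * unitBallVolume (n + 1) := by
    rw [EuclideanSpace.volume_closedBall_eq_unitBallVolume, card_fin, ENNReal.toReal_mul,
      ENNReal.toReal_pow, ENNReal.toReal_ofReal hρ.le,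
      ENNReal.toReal_ofReal (unitBallVolume_pos _).le]
  rw [intervalIntegral.integral_congr hcap,
    integral_integral_eq_integral_sub_mul (continuous_ballSliceVolume n ρ)]
  simp_rw [sub_zero]
  rw [integral_mul_ballSliceVolume n hρ.le, hball]
  push_cast
  rw [← unitBallVolume_div_succ]
  have := (unitBallVolume_pos n).ne'
  have := (unitBallVolume_pos (n + 1)).ne'
  field_simp
  ring
end
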